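/- arXiv:2212.05308 — 2 statements merged into one kernel-verified Lean document; each statement's English description precedes it below -/
import Mathlib

section
/- For a T-periodic linear control system, if x ∈ R_{kT+τ}(τ, 0) and y ∈ R_{ℓT+τ}(τ, 0) for k, ℓ ∈ ℕ and τ ∈ [0,T], then x + X(T+τ,τ)^k y ∈ R_{(k+ℓ)T+τ}(τ, 0), where X is the principal fundamental solution. -/
/-!
Concatenate controls: steer to `y` during the first `ℓ` periods, then replay the control
reaching `x`, shifted in time by `ℓT`. By variation of parameters the first piece contributes
`X((k+ℓ)T+τ, ℓT+τ) y`, and periodicity turns this transition operator into `X(kT+τ, τ)`,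
which is the `k`-th power of the monodromy operator `X(T+τ, τ)`; the second piece is `x`,
again by periodicity.
-/

open MeasureTheory

/-- The time-`t` reachable set from `0` at initial time `τ` of the periodic linear
control system, given by the variation-of-parameters formula. -/
def reachSet0 (d m : ℕ) (X : ℝ → ℝ → ((Fin d → ℝ) →L[ℝ] (Fin d → ℝ)))
    (B : ℝ → ((Fin m → ℝ) →L[ℝ] (Fin d → ℝ))) (U : Set (Fin m → ℝ))
    (t t0 : ℝ) : Set (Fin d → ℝ) :=
  {y | ∃ u : ℝ → Fin m → ℝ, Measurable u ∧ (∀ᵐ s ∂volume, u s ∈ U) ∧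
    y = ∫ s in t0..t, X t s (B s (u s))}

theorem diag_periodic_nat_mul {α : Type*} {f : ℝ → ℝ → α} {T : ℝ}
    (hf : ∀ t s, f (t + T) (s + T) = f t s) (n : ℕ) (t s : ℝ) :
    f (t + n * T) (s + n * T) = f t s := by
  have hper : Function.Periodic (fun p : ℝ × ℝ => f p.1 p.2) (T, T) := fun p => hf p.1 p.2
  simpa using hper.nsmul n (t, s)

theorem nat_mul_period_eq_monodromy_pow {M : Type*} [Monoid M] {X : ℝ → ℝ → M} {T : ℝ}
    (hXid : ∀ s, X s s = 1) (hXcoc : ∀ t r s, X t r * X r s = X t s)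
    (hXper : ∀ t s, X (t + T) (s + T) = X t s) (τ : ℝ) (n : ℕ) :
    X (n * T + τ) τ = X (T + τ) τ ^ n := by
  induction n with
  | zero => simp [hXid]
  | succ n ih =>
    have hstep : X ((n + 1 : ℕ) * T + τ) (n * T + τ) = X (T + τ) τ := by
      rw [← diag_periodic_nat_mul hXper n (T + τ) τ]
      congr 1 <;> push_cast <;> ring
    rw [← hXcoc _ (n * T + τ), hstep, ih, pow_succ']

section ReachSet

variable {d m : ℕ} {X : ℝ → ℝ → ((Fin d → ℝ) →L[ℝ] (Fin d → ℝ))}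
  {B : ℝ → ((Fin m → ℝ) →L[ℝ] (Fin d → ℝ))} {U : Set (Fin m → ℝ)}

theorem reachSet0_add_period {c : ℝ} (hXper : ∀ t s, X (t + c) (s + c) = X t s)
    (hBper : ∀ s, B (s + c) = B s) {t t0 : ℝ} {x : Fin d → ℝ}
    (hx : x ∈ reachSet0 d m X B U t t0) :
    x ∈ reachSet0 d m X B U (t + c) (t0 + c) := by
  obtain ⟨u, hu_meas, hu_mem, rfl⟩ := hx
  refine ⟨fun s => u (s - c), hu_meas.comp (measurable_id.sub_const c), ?_, ?_⟩
  · exact (measurePreserving_sub_right volume c).quasiMeasurePreserving.ae hu_mem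
  · have hshift : ∀ s, X (t + c) s (B s (u (s - c))) = X t (s - c) (B (s - c) (u (s - c))) :=
      fun s => by rw [← hXper t (s - c), ← hBper (s - c), sub_add_cancel]
    simp_rw [hshift, intervalIntegral.integral_comp_sub_right (fun s => X t s (B s (u s))),
      add_sub_cancel_right]

theorem reachSet0_concat (hXcoc : ∀ t r s, (X t r).comp (X r s) = X t s)
    (hInt : ∀ u : ℝ → Fin m → ℝ, Measurable u → (∀ᵐ s ∂volume, u s ∈ U) →
      ∀ a b : ℝ, IntervalIntegrable (fun s => X b s (B s (u s))) volume a b)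
    {t0 t1 t2 : ℝ} (h01 : t0 ≤ t1) (h12 : t1 ≤ t2) {y z : Fin d → ℝ}
    (hy : y ∈ reachSet0 d m X B U t1 t0) (hz : z ∈ reachSet0 d m X B U t2 t1) :
    X t2 t1 y + z ∈ reachSet0 d m X B U t2 t0 := by
  obtain ⟨uy, huy_meas, huy_mem, rfl⟩ := hy
  obtain ⟨uz, huz_meas, huz_mem, rfl⟩ := hz
  set u : ℝ → Fin m → ℝ := fun s => if s ≤ t1 then uy s else uz s
  have hu_meas : Measurable u := Measurable.ite measurableSet_Iic huy_meas huz_meas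
  have hu_mem : ∀ᵐ s ∂volume, u s ∈ U := by
    filter_upwards [huy_mem, huz_mem] with s hys hzs
    dsimp only [u]
    split_ifs <;> assumption
  refine ⟨u, hu_meas, hu_mem, ?_⟩
  have hfirst : ∫ s in t0..t1, X t2 s (B s (u s)) = X t2 t1 (∫ s in t0..t1, X t1 s (B s (uy s))) := by
    rw [← (X t2 t1).intervalIntegral_comp_comm (hInt uy huy_meas huy_mem t0 t1)]
    refine intervalIntegral.integral_congr_ae (ae_of_all _ fun s hs => ?_)
    rw [Set.uIoc_of_le h01] at hs
    simp [u, hs.2, ← hXcoc t2 t1 s]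
  have hsecond : ∫ s in t1..t2, X t2 s (B s (u s)) = ∫ s in t1..t2, X t2 s (B s (uz s)) := by
    refine intervalIntegral.integral_congr_ae (ae_of_all _ fun s hs => ?_)
    rw [Set.uIoc_of_le h12] at hs
    simp [u, not_le.2 hs.1]
  have hint := hInt u hu_meas hu_mem t0 t2
  have ht1 : t1 ∈ Set.uIcc t0 t2 := Set.mem_uIcc_of_le h01 h12
  rw [← intervalIntegral.integral_add_adjacent_intervals
    (hint.mono_set (Set.uIcc_subset_uIcc_left ht1))
    (hint.mono_set (Set.uIcc_subset_uIcc_right ht1)), hfirst, hsecond]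

end ReachSet

theorem stmt5_general (d m : ℕ) (T : ℝ) (hT : 0 < T) (τ : ℝ)
    (X : ℝ → ℝ → ((Fin d → ℝ) →L[ℝ] (Fin d → ℝ)))
    (B : ℝ → ((Fin m → ℝ) →L[ℝ] (Fin d → ℝ)))
    (hXid : ∀ s, X s s = ContinuousLinearMap.id ℝ (Fin d → ℝ))
    (hXcoc : ∀ t r s, (X t r).comp (X r s) = X t s)
    (hXper : ∀ t s, X (t + T) (s + T) = X t s)
    (hBper : ∀ s, B (s + T) = B s)
    (U : Set (Fin m → ℝ))
    (hInt : ∀ u : ℝ → Fin m → ℝ, Measurable u → (∀ᵐ s ∂volume, u s ∈ U) →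
      ∀ a b : ℝ, IntervalIntegrable (fun s => X b s (B s (u s))) volume a b)
    (k l : ℕ) (x y : Fin d → ℝ)
    (hx : x ∈ reachSet0 d m X B U (k * T + τ) τ)
    (hy : y ∈ reachSet0 d m X B U (l * T + τ) τ) :
    x + ((X (T + τ) τ) ^ k) y ∈ reachSet0 d m X B U ((k + l) * T + τ) τ := by
  have hx' : x ∈ reachSet0 d m X B U ((k + l) * T + τ) (l * T + τ) := by
    convert reachSet0_add_period (diag_periodic_nat_mul hXper l)
      (Function.Periodic.nat_mul hBper l) hx using 2 <;> ring
  have hmonodromy : X ((k + l) * T + τ) (l * T + τ) = X (T + τ) τ ^ k := by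
    rw [← nat_mul_period_eq_monodromy_pow hXid hXcoc hXper τ k, ← diag_periodic_nat_mul hXper l (k * T + τ) τ]
    congr 1 <;> ring
  rw [add_comm x, ← hmonodromy]
  have hτ_le : τ ≤ l * T + τ := le_add_of_nonneg_left (by positivity)
  have hle : l * T + τ ≤ (k + l) * T + τ := by
    gcongr
    exact le_add_of_nonneg_left k.cast_nonneg
  exact reachSet0_concat hXcoc hInt hτ_le hle hy hx'

/-- If `x ∈ R_{kT+τ}(τ,0)` and `y ∈ R_{ℓT+τ}(τ,0)`, then
`x + X(T+τ,τ)^k y ∈ R_{(k+ℓ)T+τ}(τ,0)`. -/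
theorem stmt5 (d m : ℕ) (T : ℝ) (hT : 0 < T) (τ : ℝ) (hτ : τ ∈ Set.Icc 0 T)
    (X : ℝ → ℝ → ((Fin d → ℝ) →L[ℝ] (Fin d → ℝ)))
    (B : ℝ → ((Fin m → ℝ) →L[ℝ] (Fin d → ℝ)))
    (hXid : ∀ s, X s s = ContinuousLinearMap.id ℝ (Fin d → ℝ))
    (hXcoc : ∀ t r s, (X t r).comp (X r s) = X t s)
    (hXper : ∀ t s, X (t + T) (s + T) = X t s)
    (hBper : ∀ s, B (s + T) = B s)
    (U : Set (Fin m → ℝ))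
    (hInt : ∀ u : ℝ → Fin m → ℝ, Measurable u → (∀ᵐ s ∂volume, u s ∈ U) →
      ∀ a b : ℝ, IntervalIntegrable (fun s => X b s (B s (u s))) volume a b)
    (k l : ℕ) (x y : Fin d → ℝ)
    (hx : x ∈ reachSet0 d m X B U (k * T + τ) τ)
    (hy : y ∈ reachSet0 d m X B U (l * T + τ) τ) :
    x + ((X (T + τ) τ) ^ k) y ∈ reachSet0 d m X B U ((k + l) * T + τ) τ :=
  stmt5_general d m T hT τ X B hXid hXcoc hXper hBper U hInt k l x y hx hy
end

section
/- Let δ > 0 and μ ∈ ℂ with |μ| ≥ 1. Then there exist a strictly increasing sequence n_k → ∞ and complex numbers a_{n_k} with |a_{n_k}| < δ such that μ^{n_k} a_{n_k} ∈ ℝ and |μ^{n_k} a_{n_k}| ≥ δ/2 for all k. -/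
/-! No subsequence is needed: `a n := (δ / 2) / μ ^ n` works for every `n`, since
`μ ^ n * a n = δ / 2` is real and `‖a n‖ ≤ δ / 2` because `‖μ ^ n‖ ≥ 1`. -/

theorem norm_div_pow_le_of_one_le_norm {𝕜 : Type*} [NormedDivisionRing 𝕜] {μ : 𝕜}
    (hμ : 1 ≤ ‖μ‖) (z : 𝕜) (n : ℕ) : ‖z / μ ^ n‖ ≤ ‖z‖ := by
  rw [norm_div, norm_pow]
  exact div_le_self (norm_nonneg z) (one_le_pow₀ hμ)

/-- Let `δ > 0` and `μ ∈ ℂ` with `|μ| ≥ 1`. Then there exist a strictly increasing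
sequence `n_k → ∞` and complex numbers `a_{n_k}` with `|a_{n_k}| < δ` such that
`μ^{n_k} a_{n_k}` is real and `|μ^{n_k} a_{n_k}| ≥ δ/2` for all `k`. -/
theorem stmt7 (δ : ℝ) (hδ : 0 < δ) (μ : ℂ) (hμ : 1 ≤ ‖μ‖) :
    ∃ n : ℕ → ℕ, StrictMono n ∧ ∃ a : ℕ → ℂ,
      ∀ k, ‖a k‖ < δ ∧ (μ ^ n k * a k).im = 0 ∧
        δ / 2 ≤ ‖μ ^ n k * a k‖ := by
  have hμ0 : μ ≠ 0 := norm_pos_iff.mp (one_pos.trans_le hμ)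
  have hc : ‖((δ / 2 : ℝ) : ℂ)‖ = δ / 2 := Complex.norm_of_nonneg (by positivity)
  refine ⟨id, strictMono_id, fun k => ((δ / 2 : ℝ) : ℂ) / μ ^ k, fun k => ?_⟩
  have hcancel : μ ^ k * (((δ / 2 : ℝ) : ℂ) / μ ^ k) = ((δ / 2 : ℝ) : ℂ) :=
    mul_div_cancel₀ _ (pow_ne_zero k hμ0)
  refine ⟨?_, ?_, ?_⟩
  · calc ‖((δ / 2 : ℝ) : ℂ) / μ ^ k‖ ≤ δ / 2 :=
          (norm_div_pow_le_of_one_le_norm hμ _ k).trans_eq hc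
      _ < δ := half_lt_self hδ
  · simp only [id, hcancel, Complex.ofReal_im]
  · simp only [id, hcancel, hc, le_refl]
end
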